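/- arXiv:1002.3808 — 4 statements merged into one kernel-verified Lean document; each statement's English description precedes it below -/
import Mathlib

section
/- For a fixed squarefree-supported multiplicative setup: for coprime natural numbers q₁ and q₀q₂, the series ∑_{d ≥ 1, gcd(d,q₁)=1} μ(d)·gcd(d, q₀q₂)/d² converges absolutely and equals (6/π²)·∏_{p | q₁}(1 - 1/p²)^{-1}·∏_{p | q₀q₂}(1 + 1/p)^{-1}. -/
open ArithmeticFunction Real

/-!
Write `q = q₀q₂`. The summand `f d` is multiplicative and supported on squarefree `d`, so its sum is the Euler
product `∏_p (1 + f p)`. Here `f p = 0` for `p ∣ q₁`, `f p = -1/p` for `p ∣ q₀q₂` and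
`f p = -1/p²` otherwise, so each Euler factor is `1 - 1/p²` times a correction which is `1` for
all but finitely many `p`, namely `(1 - 1/p²)⁻¹` or `(1 - 1/p)/(1 - 1/p²) = (1 + 1/p)⁻¹`.
Finally `∏_p (1 - 1/p²) = 1/ζ(2) = 6/π²`.
-/

theorem hasProd_mulIndicator_finset {α M : Type*} [CommMonoid M] [TopologicalSpace M]
    (s : Finset α) (g : α → M) : HasProd ((s : Set α).mulIndicator g) (∏ a ∈ s, g a) := by
  rw [← Finset.prod_mulIndicator_subset g subset_rfl]
  exact hasProd_prod_of_ne_finset_one fun a ha => Set.mulIndicator_of_notMem ha g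

theorem tsum_prime_pow_eq_one_add {R : Type*} [AddCommMonoid R] [TopologicalSpace R] [One R]
    {f : ℕ → R} (hf₁ : f 1 = 1) (hsq : ∀ n, ¬ Squarefree n → f n = 0) {p : ℕ} (hp : p.Prime) :
    ∑' e, f (p ^ e) = 1 + f p := by
  have hvanish : ∀ e ∉ ({0, 1} : Finset ℕ), f (p ^ e) = 0 := by
    intro e he
    simp only [Finset.mem_insert, Finset.mem_singleton, not_or] at he
    exact hsq _ fun hsf => he.2 ((Nat.squarefree_pow_iff hp.ne_one he.1).mp hsf).2
  rw [tsum_eq_sum hvanish, Finset.sum_pair zero_ne_one, pow_zero, pow_one, hf₁]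

theorem hasProd_one_add_of_squarefree {R : Type*} [NormedCommRing R] [CompleteSpace R]
    {f : ℕ → R} (hf₁ : f 1 = 1) (hmul : ∀ {m n : ℕ}, m.Coprime n → f (m * n) = f m * f n)
    (hsum : Summable (‖f ·‖)) (hsq : ∀ n, ¬ Squarefree n → f n = 0) :
    HasProd ({p : ℕ | p.Prime}.mulIndicator fun p => 1 + f p) (∑' n, f n) := by
  have := EulerProduct.eulerProduct_hasProd_mulIndicator hf₁ hmul hsum (hsq 0 not_squarefree_zero)
  rwa [Set.mulIndicator_congr (s := {p : ℕ | p.Prime}) fun p hp =>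
    tsum_prime_pow_eq_one_add hf₁ hsq hp] at this

theorem hasProd_one_sub_inv_sq_primes :
    HasProd ({p : ℕ | p.Prime}.mulIndicator fun p => 1 - 1 / (p : ℝ) ^ 2) (6 / π ^ 2) := by
  let f : ℕ →*₀ ℝ := (invMonoidWithZeroHom.comp (powMonoidWithZeroHom two_ne_zero)).comp
    (Nat.castRingHom ℝ).toMonoidWithZeroHom
  have hf : ∀ n, f n = 1 / (n : ℝ) ^ 2 := fun n => by simp [f, invMonoidWithZeroHom]
  have hsum : Summable (‖f ·‖) := by simp [hf]
  have hζ : ∑' n, f n = π ^ 2 / 6 := by rw [← hasSum_zeta_two.tsum_eq]; simp [hf]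
  have hprod := (EulerProduct.eulerProduct_completely_multiplicative_hasProd hsum).inv₀
    (by rw [hζ]; positivity)
  rw [hζ, inv_div] at hprod
  simp only [inv_inv, hf] at hprod
  exact hasProd_subtype_iff_mulIndicator.mp hprod

noncomputable def moebiusGcdWeight (q₁ q d : ℕ) : ℝ :=
  if d.Coprime q₁ then (moebius d : ℝ) * d.gcd q / (d : ℝ) ^ 2 else 0

namespace moebiusGcdWeight

variable {q₁ q : ℕ}

theorem apply_one : moebiusGcdWeight q₁ q 1 = 1 := by
  simp [moebiusGcdWeight]

theorem of_not_squarefree {d : ℕ} (hd : ¬ Squarefree d) : moebiusGcdWeight q₁ q d = 0 := by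
  simp [moebiusGcdWeight, moebius_eq_zero_of_not_squarefree hd]

theorem map_mul {m n : ℕ} (hmn : m.Coprime n) :
    moebiusGcdWeight q₁ q (m * n) = moebiusGcdWeight q₁ q m * moebiusGcdWeight q₁ q n := by
  unfold moebiusGcdWeight
  by_cases hm : m.Coprime q₁; swap
  · simp [hm, Nat.coprime_mul_iff_left]
  by_cases hn : n.Coprime q₁; swap
  · simp [hn, Nat.coprime_mul_iff_left]
  rw [if_pos (Nat.Coprime.mul_left hm hn), if_pos hm, if_pos hn,
    isMultiplicative_moebius.map_mul_of_coprime hmn, Nat.Coprime.mul_gcd hmn]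
  push_cast
  ring

theorem abs_le (hq : q ≠ 0) (d : ℕ) : |moebiusGcdWeight q₁ q d| ≤ q / (d : ℝ) ^ 2 := by
  unfold moebiusGcdWeight
  split_ifs
  · rw [abs_div, abs_mul, abs_pow, Nat.abs_cast, Nat.abs_cast]
    gcongr
    calc |(moebius d : ℝ)| * d.gcd q ≤ 1 * q := by
          gcongr
          · exact_mod_cast abs_moebius_le_one
          · exact Nat.gcd_le_right d (Nat.pos_of_ne_zero hq)
      _ = q := one_mul _
  · simp only [abs_zero]
    positivity

theorem summable_abs (hq : q ≠ 0) : Summable fun d => |moebiusGcdWeight q₁ q d| :=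
  Summable.of_nonneg_of_le (fun _ => abs_nonneg _) (abs_le hq)
    (by simpa [div_eq_mul_inv] using (Real.summable_nat_pow_inv.mpr one_lt_two).mul_left (q : ℝ))

theorem one_add_apply_prime (hcop : q₁.Coprime q) {p : ℕ} (hp : p.Prime) :
    1 + moebiusGcdWeight q₁ q p =
      (1 - 1 / (p : ℝ) ^ 2) * (if p ∣ q₁ then (1 - 1 / (p : ℝ) ^ 2)⁻¹ else 1) *
        (if p ∣ q then (1 + 1 / (p : ℝ))⁻¹ else 1) := by
  have hp2 : (2 : ℝ) ≤ p := by exact_mod_cast hp.two_le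
  unfold moebiusGcdWeight
  by_cases h₁ : p ∣ q₁
  · have hq : ¬ p ∣ q := fun h => hp.one_lt.ne' (Nat.eq_one_of_dvd_coprimes hcop h₁ h)
    have hne : 1 - 1 / (p : ℝ) ^ 2 ≠ 0 := by
      refine (sub_pos.mpr ?_).ne'
      rw [div_lt_one (by positivity)]
      nlinarith
    rw [if_neg (fun h => (hp.coprime_iff_not_dvd.mp h) h₁), if_pos h₁, if_neg hq,
      mul_inv_cancel₀ hne]
    ring
  rw [if_pos (hp.coprime_iff_not_dvd.mpr h₁), if_neg h₁, moebius_apply_prime hp]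
  by_cases hq : p ∣ q
  · rw [if_pos hq, Nat.gcd_eq_left hq]
    field_simp
    ring
  · rw [if_neg hq, (hp.coprime_iff_not_dvd.mpr hq).gcd_eq_one]
    push_cast
    ring

theorem hasProd_one_add (h₁ : q₁ ≠ 0) (hq : q ≠ 0) (hcop : q₁.Coprime q) :
    HasProd ({p : ℕ | p.Prime}.mulIndicator fun p => 1 + moebiusGcdWeight q₁ q p)
      (6 / π ^ 2 * (∏ p ∈ q₁.primeFactors, (1 - 1 / (p : ℝ) ^ 2)⁻¹) *
        ∏ p ∈ q.primeFactors, (1 + 1 / (p : ℝ))⁻¹) := by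
  convert (hasProd_one_sub_inv_sq_primes.mul (hasProd_mulIndicator_finset q₁.primeFactors _)).mul
    (hasProd_mulIndicator_finset q.primeFactors _) using 1
  funext p
  by_cases hp : p.Prime
  · simp only [Set.mulIndicator_apply, Set.mem_ofPred_eq, Finset.mem_coe,
      Nat.mem_primeFactors_of_ne_zero h₁, Nat.mem_primeFactors_of_ne_zero hq, hp, true_and,
      if_true]
    exact one_add_apply_prime hcop hp
  · have hpf : ∀ n : ℕ, p ∉ (n.primeFactors : Set ℕ) := fun n h =>
      hp (Nat.prime_of_mem_primeFactors h)
    simp [hp, hpf]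

end moebiusGcdWeight

theorem stmt_4 (q0 q1 q2 : ℕ) (h1 : 0 < q1) (h0 : 0 < q0 * q2)
    (hcop : Nat.Coprime q1 (q0 * q2)) :
    Summable (fun d : ℕ =>
      |(if Nat.Coprime d q1 then (moebius d : ℝ) * (Nat.gcd d (q0 * q2)) / (d : ℝ) ^ 2 else 0)|) ∧
    (∑' d : ℕ,
        if Nat.Coprime d q1 then (moebius d : ℝ) * (Nat.gcd d (q0 * q2)) / (d : ℝ) ^ 2 else 0) =
      (6 / π ^ 2) * (∏ p ∈ q1.primeFactors, (1 - 1 / (p : ℝ) ^ 2)⁻¹) *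
        ∏ p ∈ (q0 * q2).primeFactors, (1 + 1 / (p : ℝ))⁻¹ := by
  have hsum := moebiusGcdWeight.summable_abs (q₁ := q1) h0.ne'
  refine ⟨hsum, ?_⟩
  have hEuler := hasProd_one_add_of_squarefree moebiusGcdWeight.apply_one
    moebiusGcdWeight.map_mul (by simpa only [Real.norm_eq_abs] using hsum)
    fun _ => moebiusGcdWeight.of_not_squarefree
  exact hEuler.unique (moebiusGcdWeight.hasProd_one_add h1.ne' h0.ne' hcop)
end

section
/- The number of pairs (m, n) with n ≤ x, gcd(m, n) = 1, and λ₁n < m < λ₂n, where 0 ≤ λ₁ < λ₂ are fixed reals, satisfies S(x) = (3/π²)(λ₂ - λ₁)x² + O(x log x) as x → ∞. -/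
/-!
Möbius inversion over the common divisor `d = gcd(m, n)` (writing `n = d q`, `m = d k`) gives
`S(x) = ∑_{d ≤ x} μ(d) A(x / d)`, where `A(y)` counts all lattice points `(q, k)` with `q ≤ y`
and `λ₁ q < k < λ₂ q`. Counting column by column, `A(y) = (λ₂ - λ₁) y² / 2 + O(y)`; the errors
sum to `O(x ∑_{d ≤ x} 1 / d) = O(x log x)`, and `∑_{d ≤ x} μ(d) / d² = 1 / ζ(2) + O(1 / x)`
with `ζ(2) = π² / 6`.
-/

open Filter Asymptotics Real Topology
open Finset
open ArithmeticFunction hiding log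
open scoped Moebius LSeries.notation

namespace Nat

theorem mem_Ioo_floor_ceil {a b : ℝ} (ha : 0 ≤ a) {m : ℕ} :
    m ∈ Ioo ⌊a⌋₊ ⌈b⌉₊ ↔ a < m ∧ m < b := by
  rw [mem_Ioo, Nat.floor_lt ha, Nat.lt_ceil]

theorem abs_card_Ioo_floor_ceil_sub_le {a b : ℝ} (ha : 0 ≤ a) (hab : a ≤ b) :
    |(#(Ioo ⌊a⌋₊ ⌈b⌉₊) : ℝ) - (b - a)| ≤ 1 := by
  have ha₁ : (⌊a⌋₊ : ℝ) ≤ a := Nat.floor_le ha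
  have ha₂ : a < ⌊a⌋₊ + 1 := Nat.lt_floor_add_one a
  have hb₁ : (⌈b⌉₊ : ℝ) < b + 1 := Nat.ceil_lt_add_one (ha.trans hab)
  have hb₂ : b ≤ ⌈b⌉₊ := Nat.le_ceil b
  rw [Nat.card_Ioo, abs_le]
  rcases le_or_gt ⌈b⌉₊ (⌊a⌋₊ + 1) with h | h
  · have h' : (⌈b⌉₊ : ℝ) ≤ ⌊a⌋₊ + 1 := by exact_mod_cast h
    rw [show ⌈b⌉₊ - ⌊a⌋₊ - 1 = 0 by omega, Nat.cast_zero]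
    constructor <;> linarith
  · rw [Nat.cast_sub (by omega), Nat.cast_sub (by omega : ⌊a⌋₊ ≤ ⌈b⌉₊)]
    push_cast
    constructor <;> linarith

theorem card_filter_dvd_Ioo_floor_ceil {a b : ℝ} (ha : 0 ≤ a) {d : ℕ} (hd : 0 < d) :
    #{m ∈ Ioo ⌊a⌋₊ ⌈b⌉₊ | d ∣ m} = #(Ioo ⌊a / d⌋₊ ⌈b / d⌉₊) := by
  have hd' : (0 : ℝ) < d := by exact_mod_cast hd
  rw [← Finset.card_image_of_injective (Ioo ⌊a / d⌋₊ ⌈b / d⌉₊) (mul_right_injective₀ hd.ne')]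
  congr 1
  ext m
  simp only [mem_filter, mem_image, mem_Ioo_floor_ceil ha,
    mem_Ioo_floor_ceil (div_nonneg ha hd'.le), div_lt_iff₀ hd', lt_div_iff₀ hd']
  constructor
  · rintro ⟨hm, k, rfl⟩
    exact ⟨k, by push_cast at hm; constructor <;> linarith, rfl⟩
  · rintro ⟨k, hk, rfl⟩
    exact ⟨by push_cast; constructor <;> linarith, dvd_mul_right d k⟩

end Nat

theorem card_filter_coprime_eq_sum_moebius (s : Finset ℕ) {n : ℕ} (hn : n ≠ 0) :
    (#{m ∈ s | m.Coprime n} : ℝ) = ∑ d ∈ n.divisors, (μ d : ℝ) * #{m ∈ s | d ∣ m} := by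
  have hcoprime (m : ℕ) :
      (if m.Coprime n then 1 else 0 : ℝ) = ∑ d ∈ n.divisors with d ∣ m, (μ d : ℝ) := by
    have hgcd : {d ∈ n.divisors | d ∣ m} = (m.gcd n).divisors := by
      ext d
      simp only [mem_filter, Nat.mem_divisors, Nat.dvd_gcd_iff, Nat.gcd_eq_zero_iff, hn,
        ne_eq, not_false_eq_true, and_true, and_false]
      tauto
    have := congrArg (· (m.gcd n)) (coe_moebius_mul_coe_zeta (R := ℝ))
    simp only [coe_mul_zeta_apply, intCoe_apply, one_apply] at this
    rw [hgcd, this]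
  simp only [card_filter, Nat.cast_sum, Nat.cast_ite, Nat.cast_one, Nat.cast_zero, hcoprime,
    sum_filter, mul_sum, mul_ite, mul_one, mul_zero]
  exact sum_comm

theorem hasSum_moebius_div_sq : HasSum (fun d : ℕ => (μ d : ℝ) / d ^ 2) (6 / π ^ 2) := by
  have hs : 1 < (2 : ℂ).re := by norm_num
  have hL : L ↗μ 2 = 6 / π ^ 2 := by
    have := LSeries_zeta_mul_Lseries_moebius hs
    rw [LSeries_zeta_eq_riemannZeta hs, riemannZeta_two] at this
    have hπ : (π : ℂ) ≠ 0 := Complex.ofReal_ne_zero.2 pi_ne_zero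
    field_simp at this ⊢
    linear_combination this
  have hsum := (LSeriesSummable_moebius_iff.2 hs).LSeriesHasSum
  rw [LSeriesHasSum, hL] at hsum
  rw [← Complex.hasSum_ofReal]
  convert hsum using 1
  · funext n
    rcases eq_or_ne n 0 with rfl | hn
    · simp
    · rw [LSeries.term_of_ne_zero hn]
      push_cast
      norm_cast
  · push_cast
    ring

theorem abs_sum_moebius_div_sq_sub_le {N : ℕ} (hN : N ≠ 0) :
    |∑ d ∈ Icc 1 N, (μ d : ℝ) / d ^ 2 - 6 / π ^ 2| ≤ (N : ℝ)⁻¹ := by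
  have hIcc (M : ℕ) : Icc 1 M = Ioc 0 M := Icc_succ_left_eq_Ioc 0 M
  have hpartial : Tendsto (fun M => ∑ d ∈ Icc 1 M, (μ d : ℝ) / d ^ 2) atTop
      (𝓝 (6 / π ^ 2)) := by
    refine (hasSum_moebius_div_sq.tendsto_sum_nat.comp (tendsto_add_atTop_nat 1)).congr
      fun M => ?_
    rw [Function.comp_apply, range_eq_Ico, sum_eq_sum_Ico_succ_bot M.succ_pos]
    simp [Finset.Ico_add_one_right_eq_Icc]
  have hterm (d : ℕ) : |(μ d : ℝ) / d ^ 2| ≤ ((d : ℝ) ^ 2)⁻¹ := by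
    rw [abs_div, abs_of_nonneg (sq_nonneg (d : ℝ)), div_eq_mul_inv]
    exact mul_le_of_le_one_left (by positivity) (by exact_mod_cast abs_moebius_le_one (n := d))
  have htail : ∀ M ≥ N, |∑ d ∈ Icc 1 N, (μ d : ℝ) / d ^ 2 - ∑ d ∈ Icc 1 M, (μ d : ℝ) / d ^ 2|
      ≤ (N : ℝ)⁻¹ := by
    intro M hM
    rw [hIcc, hIcc, ← sum_Ioc_consecutive _ N.zero_le hM, sub_add_cancel_left, abs_neg]
    calc _ ≤ ∑ d ∈ Ioc N M, |(μ d : ℝ) / d ^ 2| := abs_sum_le_sum_abs _ _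
      _ ≤ ∑ d ∈ Ioc N M, ((d : ℝ) ^ 2)⁻¹ := sum_le_sum fun d _ => hterm d
      _ ≤ (N : ℝ)⁻¹ - (M : ℝ)⁻¹ := sum_Ioc_inv_sq_le_sub hN hM
      _ ≤ (N : ℝ)⁻¹ := sub_le_self _ (by positivity)
  exact le_of_tendsto (tendsto_const_nhds.sub hpartial).abs (eventually_atTop.2 ⟨N, htail⟩)

theorem sum_Icc_natCast (K : ℕ) : ∑ q ∈ Icc 1 K, (q : ℝ) = K * (K + 1) / 2 := by
  induction K with
  | zero => simp
  | succ k ih =>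
    rw [sum_Icc_succ_top (by omega), ih]
    push_cast
    ring

theorem sum_inv_natCast_le_one_add_log {x : ℝ} (hx : 1 ≤ x) :
    ∑ d ∈ Icc 1 ⌊x⌋₊, (d : ℝ)⁻¹ ≤ 1 + log x := by
  have hN : (0 : ℝ) < ⌊x⌋₊ := by exact_mod_cast Nat.floor_pos.2 hx
  calc ∑ d ∈ Icc 1 ⌊x⌋₊, (d : ℝ)⁻¹ = harmonic ⌊x⌋₊ := by simp [harmonic_eq_sum_Icc]
    _ ≤ 1 + log ⌊x⌋₊ := harmonic_le_one_add_log _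
    _ ≤ 1 + log x := by gcongr; exact Nat.floor_le (by linarith)

noncomputable def intervalCount (l1 l2 : ℝ) : ArithmeticFunction ℝ :=
  ⟨fun q => #(Ioo ⌊l1 * q⌋₊ ⌈l2 * q⌉₊), by simp⟩

noncomputable def coprimeCount (l1 l2 : ℝ) (n : ℕ) : ℝ :=
  #{m ∈ Icc 1 ⌈l2 * n⌉₊ | Nat.Coprime m n ∧ l1 * n < m ∧ (m : ℝ) < l2 * n}

noncomputable def latticePointCount (l1 l2 y : ℝ) : ℝ :=
  ∑ q ∈ Icc 1 ⌊y⌋₊, intervalCount l1 l2 q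

section

variable {l1 l2 : ℝ}

theorem coprimeCount_eq_card_filter_Ioo (h1 : 0 ≤ l1) (n : ℕ) :
    coprimeCount l1 l2 n = #{m ∈ Ioo ⌊l1 * n⌋₊ ⌈l2 * n⌉₊ | m.Coprime n} := by
  have hl1n : 0 ≤ l1 * n := by positivity
  unfold coprimeCount
  congr 2
  ext m
  simp only [mem_filter, mem_Icc, Nat.mem_Ioo_floor_ceil hl1n]
  constructor
  · rintro ⟨-, hc, h⟩
    exact ⟨h, hc⟩
  · rintro ⟨⟨ha, hb⟩, hc⟩
    have hm : (0 : ℝ) < m := hl1n.trans_lt ha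
    exact ⟨⟨by exact_mod_cast hm, (Nat.lt_ceil.2 hb).le⟩, hc, ha, hb⟩

theorem coprimeCount_eq_moebius_mul (h1 : 0 ≤ l1) {n : ℕ} (hn : n ≠ 0) :
    coprimeCount l1 l2 n = ((μ : ArithmeticFunction ℝ) * intervalCount l1 l2) n := by
  rw [coprimeCount_eq_card_filter_Ioo h1, card_filter_coprime_eq_sum_moebius _ hn, mul_apply,
    Nat.sum_divisorsAntidiagonal fun d q => (μ : ArithmeticFunction ℝ) d * intervalCount l1 l2 q]
  refine sum_congr rfl fun d hd => ?_
  have hd0 : (d : ℝ) ≠ 0 := by exact_mod_cast (Nat.pos_of_mem_divisors hd).ne'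
  rw [Nat.card_filter_dvd_Ioo_floor_ceil (by positivity) (Nat.pos_of_mem_divisors hd),
    intCoe_apply]
  simp only [intervalCount, coe_mk]
  rw [Nat.cast_div (Nat.dvd_of_mem_divisors hd) hd0, mul_div_assoc, mul_div_assoc]

theorem sum_coprimeCount_eq (h1 : 0 ≤ l1) (x : ℝ) :
    ∑ n ∈ Icc 1 ⌊x⌋₊, coprimeCount l1 l2 n =
      ∑ d ∈ Icc 1 ⌊x⌋₊, (μ d : ℝ) * latticePointCount l1 l2 (x / d) := by
  have hIcc (N : ℕ) : Icc 1 N = Ioc 0 N := Icc_succ_left_eq_Ioc 0 N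
  rw [hIcc, sum_congr rfl fun n hn => coprimeCount_eq_moebius_mul h1 (mem_Ioc.1 hn).1.ne',
    sum_Ioc_mul_eq_sum_sum]
  refine sum_congr rfl fun d _ => ?_
  rw [latticePointCount, Nat.floor_div_natCast, hIcc, intCoe_apply]

theorem abs_latticePointCount_sub_le (h1 : 0 ≤ l1) (h12 : l1 ≤ l2) {y : ℝ} (hy : 0 ≤ y) :
    |latticePointCount l1 l2 y - (l2 - l1) / 2 * y ^ 2| ≤ (1 + (l2 - l1) / 2) * y := by
  set K := ⌊y⌋₊
  have hKy : (K : ℝ) ≤ y := Nat.floor_le hy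
  have hyK : y < K + 1 := Nat.lt_floor_add_one y
  have hterm (q : ℕ) : |intervalCount l1 l2 q - (l2 - l1) * q| ≤ 1 := by
    have := Nat.abs_card_Ioo_floor_ceil_sub_le (a := l1 * q) (b := l2 * q) (by positivity)
      (by gcongr)
    rwa [← sub_mul] at this
  have hsum : |latticePointCount l1 l2 y - (l2 - l1) * (K * (K + 1) / 2)| ≤ K := by
    rw [← sum_Icc_natCast, mul_sum, latticePointCount, ← sum_sub_distrib]
    calc _ ≤ ∑ q ∈ Icc 1 K, |intervalCount l1 l2 q - (l2 - l1) * q| := abs_sum_le_sum_abs _ _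
      _ ≤ ∑ q ∈ Icc 1 K, 1 := sum_le_sum fun q _ => hterm q
      _ = K := by simp
  have hsq : |K * (K + 1) / 2 - y ^ 2 / 2| ≤ y / 2 := by
    rw [abs_le]
    constructor <;> nlinarith
  calc |latticePointCount l1 l2 y - (l2 - l1) / 2 * y ^ 2|
      = |(latticePointCount l1 l2 y - (l2 - l1) * (K * (K + 1) / 2)) +
          (l2 - l1) * (K * (K + 1) / 2 - y ^ 2 / 2)| := by ring_nf
    _ ≤ K + (l2 - l1) * (y / 2) := by
      have hl : 0 ≤ l2 - l1 := sub_nonneg.2 h12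
      grw [abs_add_le, hsum, abs_mul, abs_of_nonneg hl, hsq]
    _ ≤ (1 + (l2 - l1) / 2) * y := by nlinarith

theorem abs_sum_coprimeCount_sub_mul_sum_moebius_le (h1 : 0 ≤ l1) (h12 : l1 ≤ l2) {x : ℝ}
    (hx : 1 ≤ x) :
    |∑ n ∈ Icc 1 ⌊x⌋₊, coprimeCount l1 l2 n -
        (l2 - l1) / 2 * x ^ 2 * ∑ d ∈ Icc 1 ⌊x⌋₊, (μ d : ℝ) / d ^ 2|
      ≤ (1 + (l2 - l1) / 2) * (x * (1 + log x)) := by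
  have hterm (d : ℕ) (hd : d ∈ Icc 1 ⌊x⌋₊) :
      |(μ d : ℝ) * latticePointCount l1 l2 (x / d) - (l2 - l1) / 2 * x ^ 2 * ((μ d : ℝ) / d ^ 2)|
        ≤ (1 + (l2 - l1) / 2) * (x / d) := by
    have hd : (0 : ℝ) < d := by exact_mod_cast (mem_Icc.1 hd).1
    have hμ : |(μ d : ℝ)| ≤ 1 := by exact_mod_cast abs_moebius_le_one (n := d)
    rw [show (l2 - l1) / 2 * x ^ 2 * ((μ d : ℝ) / d ^ 2) = μ d * ((l2 - l1) / 2 * (x / d) ^ 2) by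
      ring, ← mul_sub, abs_mul]
    grw [hμ, abs_latticePointCount_sub_le h1 h12 (by positivity), one_mul]
  rw [sum_coprimeCount_eq h1, mul_sum, ← sum_sub_distrib]
  calc _ ≤ _ := abs_sum_le_sum_abs _ _
    _ ≤ ∑ d ∈ Icc 1 ⌊x⌋₊, (1 + (l2 - l1) / 2) * (x / d) := sum_le_sum hterm
    _ = (1 + (l2 - l1) / 2) * (x * ∑ d ∈ Icc 1 ⌊x⌋₊, (d : ℝ)⁻¹) := by
      simp only [mul_sum, div_eq_mul_inv]
    _ ≤ (1 + (l2 - l1) / 2) * (x * (1 + log x)) := by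
      have : 0 ≤ 1 + (l2 - l1) / 2 := by linarith
      grw [sum_inv_natCast_le_one_add_log hx]

theorem abs_sum_coprimeCount_sub_le (h1 : 0 ≤ l1) (h12 : l1 ≤ l2) {x : ℝ} (hx : 1 ≤ x) :
    |∑ n ∈ Icc 1 ⌊x⌋₊, coprimeCount l1 l2 n - 3 / π ^ 2 * (l2 - l1) * x ^ 2|
      ≤ (1 + 3 * (l2 - l1) / 2) * (x * (1 + log x)) := by
  set Z := ∑ d ∈ Icc 1 ⌊x⌋₊, (μ d : ℝ) / d ^ 2
  have hN : 0 < ⌊x⌋₊ := Nat.floor_pos.2 hx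
  have hN' : (1 : ℝ) ≤ ⌊x⌋₊ := by exact_mod_cast hN
  have hxN : x < ⌊x⌋₊ + 1 := Nat.lt_floor_add_one x
  have hl : 0 ≤ l2 - l1 := sub_nonneg.2 h12
  have htail : |(l2 - l1) / 2 * x ^ 2 * (Z - 6 / π ^ 2)| ≤ (l2 - l1) * (x * (1 + log x)) := by
    rw [abs_mul, abs_of_nonneg (by positivity)]
    grw [abs_sum_moebius_div_sq_sub_le hN.ne']
    calc (l2 - l1) / 2 * x ^ 2 * (⌊x⌋₊ : ℝ)⁻¹ ≤ (l2 - l1) * x := by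
          have h2N : x ≤ 2 * ⌊x⌋₊ := by linarith
          rw [← div_eq_mul_inv, div_le_iff₀ (by positivity)]
          nlinarith [mul_le_mul_of_nonneg_left h2N (mul_nonneg hl (by linarith : (0 : ℝ) ≤ x))]
      _ ≤ (l2 - l1) * (x * (1 + log x)) := by
          have := log_nonneg hx
          gcongr
          exact le_mul_of_one_le_right (by linarith) (by linarith)
  calc _ = |(∑ n ∈ Icc 1 ⌊x⌋₊, coprimeCount l1 l2 n - (l2 - l1) / 2 * x ^ 2 * Z) +
        (l2 - l1) / 2 * x ^ 2 * (Z - 6 / π ^ 2)| := by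
        congr 1
        ring
    _ ≤ (1 + (l2 - l1) / 2) * (x * (1 + log x)) + (l2 - l1) * (x * (1 + log x)) :=
        (abs_add_le _ _).trans
          (add_le_add (abs_sum_coprimeCount_sub_mul_sum_moebius_le h1 h12 hx) htail)
    _ = (1 + 3 * (l2 - l1) / 2) * (x * (1 + log x)) := by ring

end

theorem stmt_8 (l1 l2 : ℝ) (h1 : 0 ≤ l1) (h12 : l1 < l2) :
    (fun x : ℝ =>
        ((∑ n ∈ Finset.Icc 1 ⌊x⌋₊,
            ((Finset.Icc 1 ⌈l2 * n⌉₊).filter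
              (fun m => Nat.Coprime m n ∧ l1 * n < m ∧ (m : ℝ) < l2 * n)).card : ℝ)) -
          (3 / π ^ 2) * (l2 - l1) * x ^ 2) =O[atTop]
      (fun x : ℝ => x * Real.log x) := by
  have hbound : ∀ᶠ x : ℝ in atTop,
      ‖∑ n ∈ Icc 1 ⌊x⌋₊, coprimeCount l1 l2 n - 3 / π ^ 2 * (l2 - l1) * x ^ 2‖
        ≤ (1 + 3 * (l2 - l1) / 2) * ‖x * (1 + log x)‖ := by
    filter_upwards [eventually_ge_atTop 1] with x hx
    have := log_nonneg hx
    rw [norm_eq_abs, norm_of_nonneg (by positivity)]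
    exact abs_sum_coprimeCount_sub_le h1 h12.le hx
  exact (IsBigO.of_bound _ hbound).trans
    ((isBigO_refl _ _).mul (isLittleO_const_log_atTop.isBigO.add (isBigO_refl _ _)))
end

section
/- For fixed reals 0 ≤ λ₁ < λ₂ and any subset A of the positive rationals (each rational r written uniquely as m/n with gcd(m,n)=1), define S⁰⁰_x(A) = #{m/n ∈ A : n ≤ x, λ₁ < m/n < λ₂} and S⁰¹_x(A) = ∑{1/n : m/n ∈ A, n ≤ x, λ₁ < m/n < λ₂}. Then limsup_{x→∞} S⁰¹_x(A)/S⁰¹_x(ℚ⁺) ≤ limsup_{x→∞} S⁰⁰_x(A)/S⁰⁰_x(ℚ⁺). -/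
/-!
Write `a n` and `b n` for the number of reduced fractions with denominator `n` in `A ∩ (λ₁, λ₂)`
and in `(λ₁, λ₂)`. By summation by parts against the decreasing weights `1/n`, an eventual bound
`∑_{n ≤ N} a n ≤ c ∑_{n ≤ N} b n` passes to the weighted sums up to an error bounded independently
of `N`, which becomes negligible because `∑_{n ≤ N} b n / n → ∞`: every prime
`p > 2 / (λ₂ - λ₁)` is the denominator of some reduced fraction in `(λ₁, λ₂)`, and `∑ 1/p`
diverges.
-/

open Filter Finset

theorem le_sum_mul_of_le_partial_sums {d w : ℕ → ℝ} {m : ℝ} (hw : Antitone w) (hw0 : 0 ≤ w)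
    (hd : ∀ n, m ≤ ∑ k ∈ range n, d k) (N : ℕ) : m * w 0 ≤ ∑ k ∈ range N, d k * w k := by
  cases N with
  | zero => simpa using mul_nonpos_of_nonpos_of_nonneg (by simpa using hd 0) (hw0 0)
  | succ n =>
    have hparts := sum_range_by_parts w d (n + 1)
    simp only [smul_eq_mul, add_tsub_cancel_right] at hparts
    have hinc : ∑ i ∈ range n, (w (i + 1) - w i) * ∑ k ∈ range (i + 1), d k ≤
        ∑ i ∈ range n, (w (i + 1) - w i) * m :=
      sum_le_sum fun i _ => mul_le_mul_of_nonpos_left (hd _) (sub_nonpos.2 (hw i.le_succ))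
    rw [← sum_mul, sum_range_sub] at hinc
    simp_rw [mul_comm (d _)]
    nlinarith [mul_le_mul_of_nonneg_left (hd (n + 1)) (hw0 n)]

theorem eventually_sum_mul_le_of_eventually_sum_le {a b w : ℕ → ℝ} {c ε : ℝ} (hw : Antitone w)
    (hw0 : 0 ≤ w) (hε : 0 < ε) (hdiv : Tendsto (fun N => ∑ k ∈ range N, b k * w k) atTop atTop)
    (h : ∀ᶠ N in atTop, ∑ k ∈ range N, a k ≤ c * ∑ k ∈ range N, b k) :
    ∀ᶠ N in atTop, ∑ k ∈ range N, a k * w k ≤ (c + ε) * ∑ k ∈ range N, b k * w k := by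
  obtain ⟨m, hm⟩ : BddBelow (Set.range fun N => ∑ k ∈ range N, (c * b k - a k)) := by
    refine IsBoundedUnder.bddBelow_range (isBoundedUnder_of_eventually_ge (a := 0) ?_)
    filter_upwards [h] with N hN
    simpa [sum_sub_distrib, ← mul_sum] using hN
  have habel := le_sum_mul_of_le_partial_sums hw hw0 fun n => hm ⟨n, rfl⟩
  filter_upwards [hdiv.eventually_ge_atTop (-m * w 0 / ε)] with N hN
  have := habel N
  simp only [sub_mul, mul_assoc, sum_sub_distrib, ← mul_sum] at this
  rw [div_le_iff₀ hε] at hN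
  linarith

theorem limsup_sum_mul_div_le {a b w : ℕ → ℝ} (ha : 0 ≤ a) (hab : a ≤ b) (hw : Antitone w)
    (hw0 : 0 ≤ w) (hdiv : Tendsto (fun N => ∑ k ∈ range N, b k * w k) atTop atTop) :
    limsup (fun N => (∑ k ∈ range N, a k * w k) / ∑ k ∈ range N, b k * w k) atTop ≤
      limsup (fun N => (∑ k ∈ range N, a k) / ∑ k ∈ range N, b k) atTop := by
  have hSa (N : ℕ) : 0 ≤ ∑ k ∈ range N, a k := sum_nonneg fun k _ => ha k
  have hSab (N : ℕ) : ∑ k ∈ range N, a k ≤ ∑ k ∈ range N, b k := sum_le_sum fun k _ => hab k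
  have hT (N : ℕ) : 0 ≤ (∑ k ∈ range N, a k * w k) / ∑ k ∈ range N, b k * w k :=
    div_nonneg (sum_nonneg fun k _ => mul_nonneg (ha k) (hw0 k))
      (sum_nonneg fun k _ => mul_nonneg ((ha k).trans (hab k)) (hw0 k))
  refine le_of_forall_gt_imp_ge_of_dense fun c hc => ?_
  obtain ⟨c', hc', hc'c⟩ := exists_between hc
  have hbdd : IsBoundedUnder (· ≤ ·) atTop fun N => (∑ k ∈ range N, a k) / ∑ k ∈ range N, b k :=
    isBoundedUnder_of ⟨1, fun N => div_le_one_of_le₀ (hSab N) ((hSa N).trans (hSab N))⟩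
  have hS : ∀ᶠ N in atTop, ∑ k ∈ range N, a k ≤ c' * ∑ k ∈ range N, b k := by
    filter_upwards [eventually_lt_of_limsup_lt hc' hbdd] with N hN
    rcases ((hSa N).trans (hSab N)).eq_or_lt with h0 | h0
    · rw [← h0, le_antisymm ((hSab N).trans h0.ge) (hSa N), mul_zero]
    · exact ((div_lt_iff₀ h0).1 hN).le
  refine limsup_le_of_le (isCoboundedUnder_le_of_le atTop hT) ?_
  filter_upwards [eventually_sum_mul_le_of_eventually_sum_le hw hw0 (sub_pos.2 hc'c) hdiv hS,
    hdiv.eventually_gt_atTop 0] with N hN hpos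
  rw [div_le_iff₀ hpos]
  simpa using hN

theorem tendsto_sum_div_atTop_of_one_le_on_primes {b : ℕ → ℝ} (hb : 0 ≤ b)
    (hp : ∀ᶠ p in atTop, p.Prime → 1 ≤ b p) :
    Tendsto (fun N => ∑ n ∈ range N, b n / n) atTop atTop := by
  refine (not_summable_iff_tendsto_nat_atTop_of_nonneg fun n => div_nonneg (hb n) n.cast_nonneg).1
    fun hs => not_summable_one_div_on_primes (hs.of_norm_bounded_eventually_nat ?_)
  filter_upwards [hp] with n hn
  by_cases hprime : n.Prime
  · rw [Set.indicator_of_mem (show n ∈ {p : ℕ | p.Prime} from hprime),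
      Real.norm_of_nonneg (by positivity)]
    exact div_le_div_of_nonneg_right (hn hprime) n.cast_nonneg
  · rw [Set.indicator_of_notMem (show n ∉ {p : ℕ | p.Prime} from hprime), norm_zero]
    exact div_nonneg (hb n) n.cast_nonneg

theorem exists_coprime_mem_Ioo {p : ℕ} (hp : p.Prime) {x y : ℝ} (hx : 0 ≤ x) (hxy : x + 2 < y) :
    ∃ m : ℕ, m.Coprime p ∧ x < m ∧ (m : ℝ) < y := by
  have hk : x < (⌊x⌋₊ + 1 : ℕ) := by exact_mod_cast Nat.lt_floor_add_one x
  have hk' : ((⌊x⌋₊ + 1 : ℕ) : ℝ) ≤ x + 1 := by push_cast; linarith [Nat.floor_le hx]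
  by_cases hdvd : p ∣ ⌊x⌋₊ + 1
  · refine ⟨⌊x⌋₊ + 2, ((hp.coprime_iff_not_dvd).2 fun h => hp.one_lt.ne' ?_).symm, ?_, ?_⟩
    · exact Nat.dvd_one.1 ((Nat.dvd_add_right hdvd).1 h)
    all_goals push_cast at hk hk' ⊢; linarith
  · exact ⟨_, ((hp.coprime_iff_not_dvd).2 hdvd).symm, hk, by linarith⟩

theorem Nat.map_floor_atTop {α : Type*} [Semiring α] [LinearOrder α] [IsStrictOrderedRing α]
    [FloorSemiring α] [Archimedean α] : map (Nat.floor : α → ℕ) atTop = atTop := by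
  refine le_antisymm tendsto_nat_floor_atTop ?_
  calc atTop = map (Nat.floor ∘ (Nat.cast : ℕ → α)) atTop := by
        simp [Function.comp_def, Nat.floor_natCast]
    _ ≤ map Nat.floor atTop := Filter.map_map.symm.trans_le (map_mono tendsto_natCast_atTop_atTop)

open Classical in
noncomputable def reducedFracCount (l1 l2 : ℝ) (B : Set ℚ) (n : ℕ) : ℝ :=
  ∑ m ∈ Icc 1 ⌈l2 * n⌉₊,
    if Nat.Coprime m n ∧ l1 < (m : ℝ) / n ∧ (m : ℝ) / n < l2 ∧ ((m : ℚ) / n) ∈ B then (1 : ℝ) else 0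

section reducedFracCount

variable {l1 l2 : ℝ} {B : Set ℚ} {n : ℕ}

theorem reducedFracCount_nonneg : 0 ≤ reducedFracCount l1 l2 B n :=
  sum_nonneg fun _ _ => by split_ifs <;> norm_num

theorem reducedFracCount_mono {B' : Set ℚ} (h : B ⊆ B') :
    reducedFracCount l1 l2 B n ≤ reducedFracCount l1 l2 B' n :=
  sum_le_sum fun _ _ => by
    split_ifs with hB hB'
    exacts [le_rfl, absurd ⟨hB.1, hB.2.1, hB.2.2.1, h hB.2.2.2⟩ hB', zero_le_one, le_rfl]

theorem one_le_reducedFracCount_of_prime (h1 : 0 ≤ l1) (hp : n.Prime) (hn : 2 < (l2 - l1) * n) :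
    1 ≤ reducedFracCount l1 l2 {r | 0 < r} n := by
  have hn0 : (0 : ℝ) < n := by exact_mod_cast hp.pos
  obtain ⟨m, hcop, hlt, hgt⟩ :=
    exists_coprime_mem_Ioo hp (mul_nonneg h1 hn0.le) (x := l1 * n) (y := l2 * n) (by linarith)
  have hm : 0 < m := Nat.pos_of_ne_zero fun h => hp.one_lt.ne' (by simpa [h] using hcop)
  have hmem : m ∈ Icc 1 ⌈l2 * n⌉₊ := mem_Icc.2 ⟨hm, Nat.cast_le.1 (hgt.le.trans (Nat.le_ceil _))⟩
  refine le_trans ?_ (single_le_sum (fun _ _ => by split_ifs <;> norm_num) hmem)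
  rw [if_pos ⟨hcop, (lt_div_iff₀ hn0).2 hlt, (div_lt_iff₀ hn0).2 hgt,
    show (0 : ℚ) < m / n from div_pos (Nat.cast_pos.2 hm) (Nat.cast_pos.2 hp.pos)⟩]

theorem tendsto_sum_reducedFracCount_div_atTop (h1 : 0 ≤ l1) (h12 : l1 < l2) :
    Tendsto (fun N => ∑ n ∈ range N, reducedFracCount l1 l2 {r | 0 < r} n / n) atTop atTop := by
  refine tendsto_sum_div_atTop_of_one_le_on_primes (fun _ => reducedFracCount_nonneg) ?_
  filter_upwards [tendsto_natCast_atTop_atTop.eventually_gt_atTop (2 / (l2 - l1))] with p hp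
  exact fun hprime => one_le_reducedFracCount_of_prime h1 hprime
    (by rwa [div_lt_iff₀' (sub_pos.2 h12)] at hp)

end reducedFracCount

open Classical in
theorem stmt_11 (l1 l2 : ℝ) (h1 : 0 ≤ l1) (h12 : l1 < l2) (A : Set ℚ)
    (hA : A ⊆ {r : ℚ | 0 < r}) :
    let S00 : Set ℚ → ℝ → ℝ := fun B x =>
      ∑ n ∈ Finset.Icc 1 ⌊x⌋₊, ∑ m ∈ Finset.Icc 1 ⌈l2 * n⌉₊,
        if Nat.Coprime m n ∧ l1 < (m : ℝ) / n ∧ (m : ℝ) / n < l2 ∧ ((m : ℚ) / n) ∈ B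
        then (1 : ℝ) else 0
    let S01 : Set ℚ → ℝ → ℝ := fun B x =>
      ∑ n ∈ Finset.Icc 1 ⌊x⌋₊, ∑ m ∈ Finset.Icc 1 ⌈l2 * n⌉₊,
        if Nat.Coprime m n ∧ l1 < (m : ℝ) / n ∧ (m : ℝ) / n < l2 ∧ ((m : ℚ) / n) ∈ B
        then (1 : ℝ) / n else 0
    limsup (fun x => S01 A x / S01 {r : ℚ | 0 < r} x) atTop ≤
      limsup (fun x => S00 A x / S00 {r : ℚ | 0 < r} x) atTop := by
  intro S00 S01
  set a : Set ℚ → ℕ → ℝ := fun B k => reducedFracCount l1 l2 B (k + 1)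
  set w : ℕ → ℝ := fun k => ((k + 1 : ℕ) : ℝ)⁻¹
  have hIcc (f : ℕ → ℝ) (N : ℕ) : ∑ n ∈ Icc 1 N, f n = ∑ k ∈ range N, f (k + 1) := by
    rw [range_eq_Ico, sum_Ico_add' f 0 N 1]; rfl
  have hS00 (B : Set ℚ) : S00 B = fun x => ∑ k ∈ range ⌊x⌋₊, a B k :=
    funext fun x => hIcc _ _
  have hS01 (B : Set ℚ) : S01 B = fun x => ∑ k ∈ range ⌊x⌋₊, a B k * w k := funext fun x => by
    simp only [S01, a, w, ← div_eq_mul_inv, reducedFracCount, sum_div, ite_div, zero_div]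
    exact hIcc _ _
  have hdiv : Tendsto (fun N => ∑ k ∈ range N, a {r | 0 < r} k * w k) atTop atTop := by
    have := (tendsto_add_atTop_iff_nat 1).2 (tendsto_sum_reducedFracCount_div_atTop h1 h12)
    simpa [a, w, sum_range_succ', div_eq_mul_inv] using this
  have hw : Antitone w := fun i j hij => by
    simp only [w]; gcongr
  have key := limsup_sum_mul_div_le (fun _ => reducedFracCount_nonneg)
    (fun _ => reducedFracCount_mono hA) hw (fun _ => by positivity) hdiv
  rw [← Nat.map_floor_atTop (α := ℝ), ← limsup_comp, ← limsup_comp] at key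
  rw [hS00, hS00, hS01, hS01]
  exact key
end

section
/- Heilbronn–Rohrbach-type inequality (Theorem 4): Let A, B ⊆ ℕ be finite sets such that gcd(a,b) = 1 for all a ∈ A, b ∈ B, and such that for all a₁, a₂ ∈ A one has gcd(a₁, a₂/gcd(a₁,a₂)) = 1, and similarly for B. Let ν(M(A,B|q)) be the common density of the set of rational multiples M(A,B|q) (which exists by Theorem 3). Then 1 - ν(M(A,B|q)) ≥ ∏_{p|q}(1 - 2/(p+1))·∏_{c ∈ A∪B}(1 - (1/c)·∏_{p|c}(1 - 1/(p+1))). -/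
/-!
Let `L = lcm (A ∪ B)`. The gcd conditions say that every element of `A ∪ B`, hence every lcm of
elements of `A` or of `B`, is a unitary divisor of `L`. Consequently each density in the
inclusion–exclusion formula factors as `P_q · ∏_{p ∣ mn} g p`, with `P_q = ∏_{p ∣ q} (1 - 2/(p+1))`
and `g p = (1 - 1/(p+1)) / p^{v_p(L)}` (or `0` if `p ∣ q`), so `1 - ν = 1 - P_q + P_q · Ξ` where
`Ξ` is the probability that, for a random set `T` of primes omitting each `p` independently with
probability `g p`, every pair `(a, b) ∈ A × B` has a prime factor in `T`. That event contains the
intersection of the increasing events "`a` has a prime factor in `T`", `a ∈ A`, so by the Harris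
inequality `Ξ ≥ ∏_{a ∈ A} (1 - ∏_{p ∣ a} g p) ≥ ∏_{a ∈ A} (1 - (1/a) ∏_{p ∣ a} (1 - 1/(p+1)))`.
-/

open Finset

namespace RandomSubset

variable {α ι : Type*} [DecidableEq α] (u : Finset α) (g : α → ℝ)

/-- The probability that the random subset of `u` omitting each `p ∈ u` independently with
probability `g p` equals `T`. -/
noncomputable def weight (T : Finset α) : ℝ :=
  (∏ p ∈ T, (1 - g p)) * ∏ p ∈ u \ T, g p

noncomputable def prob (P : Finset α → Prop) [DecidablePred P] : ℝ :=
  ∑ T ∈ u.powerset with P T, weight u g T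

theorem sum_weight : ∑ T ∈ u.powerset, weight u g T = 1 := by
  simpa [weight] using (prod_add (fun p => 1 - g p) g u).symm

variable {u g}

theorem weight_nonneg (hg0 : ∀ p, 0 ≤ g p) (hg1 : ∀ p, g p ≤ 1) (T : Finset α) :
    0 ≤ weight u g T :=
  mul_nonneg (prod_nonneg fun p _ => sub_nonneg.2 (hg1 p)) (prod_nonneg fun p _ => hg0 p)

theorem weight_inter_mul_weight_union (s t : Finset α) :
    weight u g (s ∩ t) * weight u g (s ∪ t) = weight u g s * weight u g t := by
  have h₁ := prod_union_inter (s₁ := s) (s₂ := t) (f := fun p => 1 - g p)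
  have h₂ := prod_union_inter (s₁ := u \ s) (s₂ := u \ t) (f := g)
  simp only [weight, sdiff_inter_distrib_right, sdiff_union_distrib]
  linear_combination (∏ p ∈ u \ s ∪ u \ t, g p) * (∏ p ∈ u \ s ∩ (u \ t), g p) * h₁
    + (∏ p ∈ s, (1 - g p)) * (∏ p ∈ t, (1 - g p)) * h₂

theorem prob_nonneg (hg0 : ∀ p, 0 ≤ g p) (hg1 : ∀ p, g p ≤ 1) (P : Finset α → Prop)
    [DecidablePred P] : 0 ≤ prob u g P :=
  sum_nonneg fun T _ => weight_nonneg hg0 hg1 T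

theorem prob_mono (hg0 : ∀ p, 0 ≤ g p) (hg1 : ∀ p, g p ≤ 1) {P Q : Finset α → Prop}
    [DecidablePred P] [DecidablePred Q] (h : ∀ T ⊆ u, P T → Q T) : prob u g P ≤ prob u g Q :=
  sum_le_sum_of_subset_of_nonneg
    (fun T hT => by
      rw [mem_filter] at hT ⊢
      exact ⟨hT.1, h T (mem_powerset.1 hT.1) hT.2⟩)
    fun T _ _ => weight_nonneg hg0 hg1 T

/-- The Harris inequality, a case of the four functions theorem since `weight` is log-modular. -/
theorem prob_mul_prob_le (hg0 : ∀ p, 0 ≤ g p) (hg1 : ∀ p, g p ≤ 1) {P Q : Finset α → Prop}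
    [DecidablePred P] [DecidablePred Q] (hP : Monotone P) (hQ : Monotone Q) :
    prob u g P * prob u g Q ≤ prob u g (fun T => P T ∧ Q T) := by
  have hw := weight_nonneg hg0 hg1 (u := u)
  have key := u.four_functions_theorem (f₁ := fun T => if P T then weight u g T else 0)
    (f₂ := fun T => if Q T then weight u g T else 0) (f₃ := weight u g)
    (f₄ := fun T => if P T ∧ Q T then weight u g T else 0)
    (fun T => by dsimp only; split_ifs <;> simp [hw])
    (fun T => by dsimp only; split_ifs <;> simp [hw]) hw
    (fun T => by dsimp only; split_ifs <;> simp [hw]) ?_ subset_rfl subset_rfl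
  · simpa only [prob, sum_filter, powerset_infs_powerset_self, powerset_sups_powerset_self,
      sum_weight, one_mul] using key
  · intro s _ t _
    split_ifs with hs ht hst hst
    · rw [weight_inter_mul_weight_union]
    · exact absurd ⟨hP le_sup_left hs, hQ le_sup_right ht⟩ hst
    all_goals simp [mul_nonneg, hw]

theorem prod_prob_le_prob_forall (hg0 : ∀ p, 0 ≤ g p) (hg1 : ∀ p, g p ≤ 1) (X : Finset ι)
    (P : ι → Finset α → Prop) [∀ i, DecidablePred (P i)] (hP : ∀ i ∈ X, Monotone (P i)) :
    ∏ i ∈ X, prob u g (P i) ≤ prob u g (fun T => ∀ i ∈ X, P i T) := by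
  classical
  induction X using Finset.induction_on with
  | empty => simp [prob, sum_weight]
  | insert i X hi ih =>
    have hX : Monotone fun T => ∀ j ∈ X, P j T :=
      fun s t hst hs j hj => hP j (mem_insert_of_mem hj) hst (hs j hj)
    calc ∏ j ∈ insert i X, prob u g (P j)
        ≤ prob u g (P i) * prob u g (fun T => ∀ j ∈ X, P j T) := by
          rw [prod_insert hi]
          exact mul_le_mul_of_nonneg_left (ih fun j hj => hP j (mem_insert_of_mem hj))
            (prob_nonneg hg0 hg1 _)
      _ ≤ prob u g (fun T => P i T ∧ ∀ j ∈ X, P j T) :=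
          prob_mul_prob_le hg0 hg1 (hP i (mem_insert_self i X)) hX
      _ ≤ prob u g (fun T => ∀ j ∈ insert i X, P j T) :=
          prob_mono hg0 hg1 fun T _ h => (forall_mem_insert _ _ _).2 h

theorem prob_disjoint {S : Finset α} (hS : S ⊆ u) : prob u g (Disjoint S) = ∏ p ∈ S, g p := by
  have hfilter : {T ∈ u.powerset | Disjoint S T} = (u \ S).powerset := by
    ext T
    simp [subset_sdiff, disjoint_comm]
  have hweight : ∀ T ∈ (u \ S).powerset, weight u g T = weight (u \ S) g T * ∏ p ∈ S, g p := by
    intro T hT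
    have hST : S ⊆ u \ T := subset_sdiff.2 ⟨hS, (subset_sdiff.1 (mem_powerset.1 hT)).2.symm⟩
    rw [weight, weight, mul_assoc, ← prod_sdiff hST, sdiff_right_comm]
  rw [prob, hfilter, sum_congr rfl hweight, ← sum_mul, sum_weight, one_mul]

theorem prob_not_disjoint {S : Finset α} (hS : S ⊆ u) :
    prob u g (fun T => ¬Disjoint S T) = 1 - ∏ p ∈ S, g p := by
  rw [← prob_disjoint hS, ← sum_weight u g, prob, prob,
    ← sum_filter_add_sum_filter_not u.powerset (Disjoint S)]
  ring

theorem boole_forall_not_disjoint [DecidableEq ι] (X : Finset ι) (s : ι → Finset α)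
    (T : Finset α) :
    (if ∀ i ∈ X, ¬Disjoint (s i) T then (1 : ℝ) else 0)
      = ∑ C ∈ X.powerset, (-1) ^ #C * if Disjoint (C.biUnion s) T then 1 else 0 := by
  have hsplit : ∀ i, (if ¬Disjoint (s i) T then (1 : ℝ) else 0)
      = -(if Disjoint (s i) T then 1 else 0) + 1 := fun i => by split_ifs <;> simp
  rw [← prod_boole, prod_congr rfl fun i _ => hsplit i, prod_add]
  refine sum_congr rfl fun C _ => ?_
  rw [prod_const_one, mul_one, prod_neg, prod_boole]
  simp only [disjoint_biUnion_left]

theorem sum_powerset_neg_one_pow_mul_prod_biUnion [DecidableEq ι] (X : Finset ι)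
    (s : ι → Finset α) (hs : ∀ i ∈ X, s i ⊆ u) :
    ∑ C ∈ X.powerset, (-1) ^ #C * ∏ p ∈ C.biUnion s, g p
      = prob u g (fun T => ∀ i ∈ X, ¬Disjoint (s i) T) := by
  have hC : ∀ C ∈ X.powerset, C.biUnion s ⊆ u := fun C hC =>
    biUnion_subset.2 fun i hi => hs i (mem_powerset.1 hC hi)
  calc ∑ C ∈ X.powerset, (-1) ^ #C * ∏ p ∈ C.biUnion s, g p
      = ∑ C ∈ X.powerset, ∑ T ∈ u.powerset,
          (-1) ^ #C * (if Disjoint (C.biUnion s) T then 1 else 0) * weight u g T := by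
        refine sum_congr rfl fun C hCX => ?_
        rw [← prob_disjoint (hC C hCX), prob, sum_filter, mul_sum]
        exact sum_congr rfl fun T _ => by split_ifs <;> simp
    _ = ∑ T ∈ u.powerset, (if ∀ i ∈ X, ¬Disjoint (s i) T then 1 else 0) * weight u g T := by
        rw [sum_comm]
        simp only [boole_forall_not_disjoint, sum_mul]
    _ = prob u g (fun T => ∀ i ∈ X, ¬Disjoint (s i) T) := by
        rw [prob, sum_filter]
        exact sum_congr rfl fun T _ => by split_ifs <;> simp

end RandomSubset

open RandomSubset in
theorem prod_one_sub_prod_le_sum_powerset_product {α ι κ : Type*} [DecidableEq α]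
    [DecidableEq ι] [DecidableEq κ] {g : α → ℝ} (hg0 : ∀ p, 0 ≤ g p) (hg1 : ∀ p, g p ≤ 1)
    (A : Finset ι) (B : Finset κ) (s : ι → Finset α) (t : κ → Finset α) :
    ∏ a ∈ A, (1 - ∏ p ∈ s a, g p)
      ≤ ∑ C ∈ (A ×ˢ B).powerset, (-1) ^ #C * ∏ p ∈ C.biUnion (fun x => s x.1 ∪ t x.2), g p := by
  set u := A.biUnion s ∪ B.biUnion t
  have hs : ∀ a ∈ A, s a ⊆ u := fun a ha => subset_union_left.trans' (subset_biUnion_of_mem s ha)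
  have ht : ∀ b ∈ B, t b ⊆ u := fun b hb => subset_union_right.trans' (subset_biUnion_of_mem t hb)
  calc ∏ a ∈ A, (1 - ∏ p ∈ s a, g p)
      = ∏ a ∈ A, prob u g (fun T => ¬Disjoint (s a) T) :=
        prod_congr rfl fun a ha => (prob_not_disjoint (hs a ha)).symm
    _ ≤ prob u g (fun T => ∀ a ∈ A, ¬Disjoint (s a) T) :=
        prod_prob_le_prob_forall hg0 hg1 A _ fun a _ _ _ hTT' hT hd => hT (hd.mono_right hTT')
    _ ≤ prob u g (fun T => ∀ x ∈ A ×ˢ B, ¬Disjoint (s x.1 ∪ t x.2) T) :=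
        prob_mono hg0 hg1 fun T _ h x hx hd =>
          h x.1 (mem_product.1 hx).1 (disjoint_union_left.1 hd).1
    _ = ∑ C ∈ (A ×ˢ B).powerset, (-1) ^ #C * ∏ p ∈ C.biUnion (fun x => s x.1 ∪ t x.2), g p :=
        (sum_powerset_neg_one_pow_mul_prod_biUnion _ _ fun x hx =>
          union_subset (hs _ (mem_product.1 hx).1) (ht _ (mem_product.1 hx).2)).symm

namespace Nat

/-- `n ∣ L` with `gcd(n, L / n) = 1`, phrased through valuations. -/
def IsUnitaryDivisor (n L : ℕ) : Prop :=
  n ≠ 0 ∧ ∀ p ∈ n.primeFactors, n.factorization p = L.factorization p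

theorem factorization_eq_zero_of_notMem_primeFactors {n p : ℕ} (h : p ∉ n.primeFactors) :
    n.factorization p = 0 :=
  Finsupp.notMem_support_iff.1 (by rwa [support_factorization])

theorem primeFactors_finset_lcm {ι : Type*} {s : Finset ι} {f : ι → ℕ} (hf : ∀ i ∈ s, f i ≠ 0) :
    (s.lcm f).primeFactors = s.biUnion fun i => (f i).primeFactors := by
  ext p
  simp only [← support_factorization, Finsupp.mem_support_iff, Finset.factorization_lcm hf,
    mem_biUnion, ne_eq, ← bot_eq_zero', Finset.sup_eq_bot_iff, not_forall, exists_prop]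

theorem factorization_le_of_coprime_div_gcd {a b p : ℕ} (ha : a ≠ 0) (hb : b ≠ 0)
    (hp : p ∈ a.primeFactors) (h : Coprime a (b / gcd a b)) :
    b.factorization p ≤ a.factorization p := by
  by_contra! hlt
  have hquot : (b / gcd a b).factorization p ≠ 0 := by
    rw [factorization_div (gcd_dvd_right a b), Finsupp.tsub_apply, factorization_gcd ha hb,
      Finsupp.inf_apply]
    omega
  exact Nat.Prime.not_coprime_iff_dvd.2 ⟨p, prime_of_mem_primeFactors hp,
    dvd_of_mem_primeFactors hp, dvd_of_factorization_pos hquot⟩ h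

namespace IsUnitaryDivisor

variable {m n L : ℕ}

theorem factorization_le (h : IsUnitaryDivisor n L) (p : ℕ) :
    n.factorization p ≤ L.factorization p := by
  by_cases hp : p ∈ n.primeFactors
  · exact (h.2 p hp).le
  · simp [factorization_eq_zero_of_notMem_primeFactors hp]

theorem finset_lcm {ι : Type*} {s : Finset ι} {f : ι → ℕ}
    (hf : ∀ i ∈ s, IsUnitaryDivisor (f i) L) : IsUnitaryDivisor (s.lcm f) L := by
  have hf0 : ∀ i ∈ s, f i ≠ 0 := fun i hi => (hf i hi).1
  refine ⟨Finset.lcm_ne_zero_iff.2 hf0, fun p hp => ?_⟩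
  rw [primeFactors_finset_lcm hf0, mem_biUnion] at hp
  obtain ⟨i, hi, hpi⟩ := hp
  rw [Finset.factorization_lcm hf0]
  exact le_antisymm (Finset.sup_le fun j hj => (hf j hj).factorization_le p)
    (((hf i hi).2 p hpi).ge.trans (Finset.le_sup (f := fun j => (f j).factorization p) hi))

theorem mul (hm : IsUnitaryDivisor m L) (hn : IsUnitaryDivisor n L) (hmn : Coprime m n) :
    IsUnitaryDivisor (m * n) L := by
  refine ⟨mul_ne_zero hm.1 hn.1, fun p hp => ?_⟩
  rw [factorization_mul hm.1 hn.1, Finsupp.add_apply]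
  rcases mem_union.1 (primeFactors_mul hm.1 hn.1 ▸ hp) with h | h
  · rw [hm.2 p h, factorization_eq_zero_of_notMem_primeFactors
      (hmn.disjoint_primeFactors.notMem_of_mem_left_finset h), add_zero]
  · rw [hn.2 p h, factorization_eq_zero_of_notMem_primeFactors
      (hmn.disjoint_primeFactors.notMem_of_mem_right_finset h), zero_add]

theorem cast_eq_prod (h : IsUnitaryDivisor n L) :
    (n : ℝ) = ∏ p ∈ n.primeFactors, (p : ℝ) ^ L.factorization p := by
  conv_lhs => rw [prod_primeFactors_pow_factorization h.1]
  push_cast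
  exact prod_congr rfl fun p hp => by rw [h.2 p hp]

end IsUnitaryDivisor

theorem isUnitaryDivisor_lcm {S : Finset ℕ} (h0 : ∀ c ∈ S, c ≠ 0)
    (h : ∀ c ∈ S, ∀ c' ∈ S, ∀ p ∈ c.primeFactors, c'.factorization p ≤ c.factorization p)
    {c : ℕ} (hc : c ∈ S) : IsUnitaryDivisor c (S.lcm id) := by
  refine ⟨h0 c hc, fun p hp => ?_⟩
  rw [Finset.factorization_lcm (f := id) h0]
  exact le_antisymm (Finset.le_sup (f := fun c' => (id c').factorization p) hc)
    (Finset.sup_le fun c' hc' => h c hc c' hc' p hp)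

theorem isUnitaryDivisor_lcm_union {A B : Finset ℕ} (hA0 : ∀ a ∈ A, 0 < a)
    (hB0 : ∀ b ∈ B, 0 < b) (hAB : ∀ a ∈ A, ∀ b ∈ B, Coprime a b)
    (hAA : ∀ a1 ∈ A, ∀ a2 ∈ A, Coprime a1 (a2 / gcd a1 a2))
    (hBB : ∀ b1 ∈ B, ∀ b2 ∈ B, Coprime b1 (b2 / gcd b1 b2)) {c : ℕ} (hc : c ∈ A ∪ B) :
    IsUnitaryDivisor c ((A ∪ B).lcm id) := by
  have h0 : ∀ c ∈ A ∪ B, c ≠ 0 := fun c hc => by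
    rcases mem_union.1 hc with h | h
    exacts [(hA0 c h).ne', (hB0 c h).ne']
  refine isUnitaryDivisor_lcm h0 (fun c hc c' hc' p hp => ?_) hc
  rcases mem_union.1 hc with hcA | hcB <;> rcases mem_union.1 hc' with hc'A | hc'B
  · exact factorization_le_of_coprime_div_gcd (h0 c hc) (h0 c' hc') hp (hAA c hcA c' hc'A)
  · simp [factorization_eq_zero_of_notMem_primeFactors
      ((hAB c hcA c' hc'B).disjoint_primeFactors.notMem_of_mem_left_finset hp)]
  · simp [factorization_eq_zero_of_notMem_primeFactors
      ((hAB c' hc'A c hcB).disjoint_primeFactors.notMem_of_mem_right_finset hp)]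
  · exact factorization_le_of_coprime_div_gcd (h0 c hc) (h0 c' hc') hp (hBB c hcB c' hc'B)

theorem one_sub_one_div_succ_nonneg (p : ℕ) : 0 ≤ 1 - 1 / ((p : ℝ) + 1) :=
  sub_nonneg.2 (div_le_one_of_le₀ (by simp) (by positivity))

theorem one_div_mul_prod_one_sub_nonneg (c : ℕ) :
    0 ≤ 1 / (c : ℝ) * ∏ p ∈ c.primeFactors, (1 - 1 / ((p : ℝ) + 1)) :=
  mul_nonneg (by positivity) (prod_nonneg fun p _ => one_sub_one_div_succ_nonneg p)

theorem one_div_mul_prod_one_sub_le_one {c : ℕ} (hc : c ≠ 0) :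
    1 / (c : ℝ) * ∏ p ∈ c.primeFactors, (1 - 1 / ((p : ℝ) + 1)) ≤ 1 := by
  have hprod : ∏ p ∈ c.primeFactors, (1 - 1 / ((p : ℝ) + 1)) ≤ 1 :=
    prod_le_one (fun p _ => one_sub_one_div_succ_nonneg p) fun p _ => by
      have : 0 ≤ 1 / ((p : ℝ) + 1) := by positivity
      linarith
  have hc1 : 1 / (c : ℝ) ≤ 1 := div_le_one_of_le₀ (by exact_mod_cast one_le_iff_ne_zero.2 hc)
    (by positivity)
  exact mul_le_one₀ hc1 (prod_nonneg fun p _ => one_sub_one_div_succ_nonneg p) hprod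

theorem prod_primeFactors_one_sub_two_div_succ_mem_Icc (q : ℕ) :
    ∏ p ∈ q.primeFactors, (1 - 2 / ((p : ℝ) + 1)) ∈ Set.Icc 0 1 := by
  have hfac : ∀ p ∈ q.primeFactors, 0 ≤ 1 - 2 / ((p : ℝ) + 1) := fun p hp => by
    have : (2 : ℝ) ≤ p := by exact_mod_cast (prime_of_mem_primeFactors hp).two_le
    rw [sub_nonneg, div_le_one (by linarith)]
    linarith
  exact ⟨prod_nonneg hfac, prod_le_one hfac fun p _ => by
    have : 0 ≤ 2 / ((p : ℝ) + 1) := by positivity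
    linarith⟩

/-- With these weights the density formula for `M(m, n | q)`, for coprime unitary divisors `m`, `n`
of `L`, becomes `∏_{p ∣ q} (1 - 2 / (p + 1)) * ∏_{p ∣ mn} primeWeight L q p`. -/
noncomputable def primeWeight (L q p : ℕ) : ℝ :=
  if p ∣ q then 0 else (1 - 1 / ((p : ℝ) + 1)) / (p : ℝ) ^ L.factorization p

theorem primeWeight_nonneg (L q p : ℕ) : 0 ≤ primeWeight L q p := by
  unfold primeWeight
  split_ifs
  exacts [le_rfl, div_nonneg (one_sub_one_div_succ_nonneg p) (by positivity)]

theorem primeWeight_le_one (L q p : ℕ) : primeWeight L q p ≤ 1 := by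
  unfold primeWeight
  split_ifs
  · exact zero_le_one
  rcases p.eq_zero_or_pos with rfl | hp
  · simp
  refine div_le_one_of_le₀ ?_ (by positivity)
  calc 1 - 1 / ((p : ℝ) + 1) ≤ 1 := by simp only [sub_le_self_iff]; positivity
    _ ≤ (p : ℝ) ^ L.factorization p := one_le_pow₀ (by exact_mod_cast hp)

theorem IsUnitaryDivisor.prod_primeWeight {n L : ℕ} (h : IsUnitaryDivisor n L) (q : ℕ) :
    ∏ p ∈ n.primeFactors, primeWeight L q p
      = if Coprime n q then 1 / (n : ℝ) * ∏ p ∈ n.primeFactors, (1 - 1 / ((p : ℝ) + 1))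
        else 0 := by
  split_ifs with hnq
  · rw [h.cast_eq_prod, one_div, ← prod_inv_distrib, ← prod_mul_distrib]
    refine prod_congr rfl fun p hp => ?_
    rw [primeWeight, if_neg fun hpq => Nat.Prime.not_coprime_iff_dvd.2
      ⟨p, prime_of_mem_primeFactors hp, dvd_of_mem_primeFactors hp, hpq⟩ hnq, div_eq_inv_mul]
  · obtain ⟨p, hp, hpn, hpq⟩ := Nat.Prime.not_coprime_iff_dvd.1 hnq
    exact prod_eq_zero (mem_primeFactors.2 ⟨hp, hpn, h.1⟩) (if_pos hpq)

theorem IsUnitaryDivisor.prod_primeWeight_le {n L : ℕ} (h : IsUnitaryDivisor n L) (q : ℕ) :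
    ∏ p ∈ n.primeFactors, primeWeight L q p
      ≤ 1 / (n : ℝ) * ∏ p ∈ n.primeFactors, (1 - 1 / ((p : ℝ) + 1)) := by
  rw [h.prod_primeWeight]
  split_ifs
  exacts [le_rfl, one_div_mul_prod_one_sub_nonneg n]

theorem prod_union_one_sub_le_prod_one_sub_prod_primeWeight {A B : Finset ℕ} {L : ℕ}
    (h : ∀ c ∈ A ∪ B, IsUnitaryDivisor c L) (q : ℕ) :
    ∏ c ∈ A ∪ B, (1 - (1 / (c : ℝ)) * ∏ p ∈ c.primeFactors, (1 - 1 / ((p : ℝ) + 1)))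
      ≤ ∏ a ∈ A, (1 - ∏ p ∈ a.primeFactors, primeWeight L q p) := by
  have hfac : ∀ c ∈ A ∪ B,
      0 ≤ 1 - (1 / (c : ℝ)) * ∏ p ∈ c.primeFactors, (1 - 1 / ((p : ℝ) + 1)) :=
    fun c hc => sub_nonneg.2 (one_div_mul_prod_one_sub_le_one (h c hc).1)
  calc _ ≤ ∏ a ∈ A, (1 - (1 / (a : ℝ)) * ∏ p ∈ a.primeFactors, (1 - 1 / ((p : ℝ) + 1))) :=
        prod_le_prod_of_subset_of_le_one subset_union_left hfac
          fun c _ _ => sub_le_self _ (one_div_mul_prod_one_sub_nonneg c)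
    _ ≤ _ := prod_le_prod (fun a ha => hfac a (mem_union_left B ha))
        fun a ha => sub_le_sub_left ((h a (mem_union_left B ha)).prod_primeWeight_le q) 1

/-- The density formula for `ν(M(m, n | q))`; it is stated only for `m ⊥ n` and `mn ⊥ q`, and
taken to be `0` otherwise. -/
noncomputable def multiplesDensity (q m n : ℕ) : ℝ :=
  if Coprime m n ∧ Coprime (m * n) q then
    (1 / ((m : ℝ) * n)) * ((∏ p ∈ q.primeFactors, (1 - 2 / ((p : ℝ) + 1))) *
      ∏ p ∈ (m * n).primeFactors, (1 - 1 / ((p : ℝ) + 1)))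
  else 0

theorem IsUnitaryDivisor.multiplesDensity_eq {m n L : ℕ} (hm : IsUnitaryDivisor m L)
    (hn : IsUnitaryDivisor n L) (hmn : Coprime m n) (q : ℕ) :
    multiplesDensity q m n = (∏ p ∈ q.primeFactors, (1 - 2 / ((p : ℝ) + 1))) *
      ∏ p ∈ (m * n).primeFactors, primeWeight L q p := by
  rw [multiplesDensity, (hm.mul hn hmn).prod_primeWeight]
  by_cases hq : Coprime (m * n) q
  · rw [if_pos ⟨hmn, hq⟩, if_pos hq]
    push_cast
    ring
  · rw [if_neg fun h => hq h.2, if_neg hq, mul_zero]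

theorem density_lcm_eq_mul_prod_primeWeight {A B : Finset ℕ} {L q : ℕ}
    (hA : ∀ a ∈ A, IsUnitaryDivisor a L) (hB : ∀ b ∈ B, IsUnitaryDivisor b L)
    (hAB : ∀ a ∈ A, ∀ b ∈ B, Coprime a b) {d : ℕ → ℕ → ℝ}
    (hd : ∀ a b : ℕ, 0 < a → 0 < b → d a b = multiplesDensity q a b)
    {C : Finset (ℕ × ℕ)} (hC : C ⊆ A ×ˢ B) :
    d (C.lcm Prod.fst) (C.lcm Prod.snd) = (∏ p ∈ q.primeFactors, (1 - 2 / ((p : ℝ) + 1))) *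
      ∏ p ∈ C.biUnion (fun x => x.1.primeFactors ∪ x.2.primeFactors), primeWeight L q p := by
  have hA' : ∀ x ∈ C, IsUnitaryDivisor x.1 L := fun x hx => hA _ (mem_product.1 (hC hx)).1
  have hB' : ∀ x ∈ C, IsUnitaryDivisor x.2 L := fun x hx => hB _ (mem_product.1 (hC hx)).2
  have hm : IsUnitaryDivisor (C.lcm Prod.fst) L := .finset_lcm hA'
  have hn : IsUnitaryDivisor (C.lcm Prod.snd) L := .finset_lcm hB'
  have hm' := primeFactors_finset_lcm fun x hx => (hA' x hx).1
  have hn' := primeFactors_finset_lcm fun x hx => (hB' x hx).1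
  have hmn : Coprime (C.lcm Prod.fst) (C.lcm Prod.snd) := by
    rw [← disjoint_primeFactors hm.1 hn.1, hm', hn']
    simp only [disjoint_biUnion_left, disjoint_biUnion_right]
    exact fun y hy x hx =>
      (hAB _ (mem_product.1 (hC hx)).1 _ (mem_product.1 (hC hy)).2).disjoint_primeFactors
  rw [hd _ _ (pos_of_ne_zero hm.1) (pos_of_ne_zero hn.1), hm.multiplesDensity_eq hn hmn,
    primeFactors_mul hm.1 hn.1, hm', hn', biUnion_union]

end Nat

theorem stmt_16_general (q : ℕ) (A B : Finset ℕ)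
    (hA0 : ∀ a ∈ A, 0 < a) (hB0 : ∀ b ∈ B, 0 < b)
    (hAB : ∀ a ∈ A, ∀ b ∈ B, Nat.Coprime a b)
    (hAA : ∀ a1 ∈ A, ∀ a2 ∈ A, Nat.Coprime a1 (a2 / Nat.gcd a1 a2))
    (hBB : ∀ b1 ∈ B, ∀ b2 ∈ B, Nat.Coprime b1 (b2 / Nat.gcd b1 b2))
    (d : ℕ → ℕ → ℝ)
    (hd : ∀ a b : ℕ, 0 < a → 0 < b →
      d a b = if Nat.Coprime a b ∧ Nat.Coprime (a * b) q then
          (1 / ((a : ℝ) * b)) *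
            ((∏ p ∈ q.primeFactors, (1 - 2 / ((p : ℝ) + 1))) *
              ∏ p ∈ (a * b).primeFactors, (1 - 1 / ((p : ℝ) + 1)))
        else 0)
    (ν : ℝ)
    (hν : ν = ∑ C ∈ (A ×ˢ B).powerset.erase ∅,
      (-1 : ℝ) ^ (C.card + 1) * d (C.lcm Prod.fst) (C.lcm Prod.snd)) :
    1 - ν ≥ (∏ p ∈ q.primeFactors, (1 - 2 / ((p : ℝ) + 1))) *
      ∏ c ∈ A ∪ B, (1 - (1 / (c : ℝ)) * ∏ p ∈ c.primeFactors, (1 - 1 / ((p : ℝ) + 1))) := by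
  set Pq : ℝ := ∏ p ∈ q.primeFactors, (1 - 2 / ((p : ℝ) + 1))
  set L := (A ∪ B).lcm id
  set Ξ := ∑ C ∈ (A ×ˢ B).powerset, (-1 : ℝ) ^ #C *
    ∏ p ∈ C.biUnion (fun x => x.1.primeFactors ∪ x.2.primeFactors), Nat.primeWeight L q p
  have hunit : ∀ c ∈ A ∪ B, Nat.IsUnitaryDivisor c L :=
    fun c => Nat.isUnitaryDivisor_lcm_union hA0 hB0 hAB hAA hBB
  have hν' : ν = Pq * (1 - Ξ) := by
    have hterm : ∀ C ∈ (A ×ˢ B).powerset.erase ∅,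
        (-1 : ℝ) ^ (#C + 1) * d (C.lcm Prod.fst) (C.lcm Prod.snd) = -Pq * ((-1) ^ #C *
          ∏ p ∈ C.biUnion (fun x => x.1.primeFactors ∪ x.2.primeFactors), Nat.primeWeight L q p) :=
      fun C hC => by
        rw [Nat.density_lcm_eq_mul_prod_primeWeight (fun a ha => hunit a (mem_union_left B ha))
          (fun b hb => hunit b (mem_union_right A hb)) hAB hd
          (mem_powerset.1 (mem_of_mem_erase hC)), pow_succ]
        ring
    rw [hν, sum_congr rfl hterm, ← mul_sum, sum_erase_eq_sub (empty_mem_powerset _)]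
    simp only [card_empty, pow_zero, biUnion_empty, prod_empty, mul_one, Ξ]
    ring
  have hΞ := (Nat.prod_union_one_sub_le_prod_one_sub_prod_primeWeight hunit q).trans
    (prod_one_sub_prod_le_sum_powerset_product (Nat.primeWeight_nonneg L q)
      (Nat.primeWeight_le_one L q) A B Nat.primeFactors Nat.primeFactors)
  obtain ⟨hPq0, hPq1⟩ := Nat.prod_primeFactors_one_sub_two_div_succ_mem_Icc q
  rw [ge_iff_le, hν']
  nlinarith [mul_le_mul_of_nonneg_left hΞ hPq0]

theorem stmt_16 (q : ℕ) (hq : 0 < q) (A B : Finset ℕ)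
    (hA0 : ∀ a ∈ A, 0 < a) (hB0 : ∀ b ∈ B, 0 < b)
    (hAB : ∀ a ∈ A, ∀ b ∈ B, Nat.Coprime a b)
    (hAA : ∀ a1 ∈ A, ∀ a2 ∈ A, Nat.Coprime a1 (a2 / Nat.gcd a1 a2))
    (hBB : ∀ b1 ∈ B, ∀ b2 ∈ B, Nat.Coprime b1 (b2 / Nat.gcd b1 b2))
    (d : ℕ → ℕ → ℝ)
    (hd : ∀ a b : ℕ, 0 < a → 0 < b →
      d a b = if Nat.Coprime a b ∧ Nat.Coprime (a * b) q then
          (1 / ((a : ℝ) * b)) *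
            ((∏ p ∈ q.primeFactors, (1 - 2 / ((p : ℝ) + 1))) *
              ∏ p ∈ (a * b).primeFactors, (1 - 1 / ((p : ℝ) + 1)))
        else 0)
    (ν : ℝ)
    (hν : ν = ∑ C ∈ (A ×ˢ B).powerset.erase ∅,
      (-1 : ℝ) ^ (C.card + 1) * d (C.lcm Prod.fst) (C.lcm Prod.snd)) :
    1 - ν ≥ (∏ p ∈ q.primeFactors, (1 - 2 / ((p : ℝ) + 1))) *
      ∏ c ∈ A ∪ B, (1 - (1 / (c : ℝ)) * ∏ p ∈ c.primeFactors, (1 - 1 / ((p : ℝ) + 1))) :=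
  stmt_16_general q A B hA0 hB0 hAB hAA hBB d hd ν hν
end
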